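/- arXiv:2506.13593 — 4 statements merged into one kernel-verified Lean document; each statement's English description precedes it below -/
import Mathlib

section
/- Let n be a positive integer, B > 0, M > 0, and let f_1,…,f_n be positive reals with f_i ≤ M for every i. Let π* ∈ (0,1]^n be a minimizer of the objective (1/n) Σ_{i=1}^n 1/π_i over π ∈ (0,1]^n subject to the constraint Σ_{i=1}^n f_i π_i ≤ B. Then for every i, the induced weight satisfies 1/π*_i ≤ max(nM/B, 1); equivalently, π*_i ≥ min(B/(nM), 1). -/
/-!
Suppose `π i < min (B / (n M)) 1`, so that `f i π i < B / n`; we improve on `π`. If the budget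
is slack, raising `π i` alone lowers `∑ 1 / π`. If it is tight, some `j` spends more than the
average `B / n`, whence `π i < π j` and `f i π i ^ 2 < f j π j ^ 2`. Raising `π i` by `f j s` and
lowering `π j` by `f i s` keeps the cost, and for small `s > 0` it lowers `∑ 1 / π`, because per
unit of budget the gain `1 / (f i π i ^ 2)` at `i` exceeds the loss `1 / (f j π j ^ 2)` at `j`.
-/

open Filter Topology Function

lemma Fintype.sum_apply_update_sub {ι α M : Type*} [Fintype ι] [DecidableEq ι] [AddCommGroup M]
    (g : ι → α → M) (π : ι → α) (i : ι) (x : α) :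
    ∑ k, g k (update π i x k) - ∑ k, g k (π k) = g i x - g i (π i) := by
  rw [← Finset.sum_sub_distrib, Fintype.sum_eq_single i fun k hk => by simp [update_of_ne hk]]
  simp

lemma one_div_add_one_div_lt_of_exchange {a b p q s : ℝ} (ha : 0 < a) (hb : 0 < b) (hs : 0 < s)
    (hx : 0 < a + q * s) (hy : 0 < b - p * s)
    (h : p * a * (a + q * s) < q * b * (b - p * s)) :
    1 / (a + q * s) + 1 / (b - p * s) < 1 / a + 1 / b := by
  rw [div_add_div _ _ hx.ne' hy.ne', div_add_div _ _ ha.ne' hb.ne',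
    div_lt_div_iff₀ (mul_pos hx hy) (mul_pos ha hb)]
  nlinarith [mul_pos hs (sub_pos.2 h)]

lemma one_div_le_max_of_min_le {x y : ℝ} (hx : 0 < x) (hy : 0 < y) (h : min y 1 ≤ x) :
    1 / x ≤ max (1 / y) 1 := by
  rcases le_total y 1 with hy1 | hy1
  · rw [min_eq_left hy1] at h
    exact (one_div_le_one_div_of_le hy h).trans (le_max_left _ _)
  · rw [min_eq_right hy1] at h
    exact ((div_le_one hx).2 h).trans (le_max_right _ _)

section BudgetAllocation

variable {ι : Type*} [Fintype ι]

def allocations (f : ι → ℝ) (B : ℝ) : Set (ι → ℝ) :=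
  {π | (∀ i, π i ∈ Set.Ioc 0 1) ∧ ∑ i, f i * π i ≤ B}

noncomputable def totalWeight (π : ι → ℝ) : ℝ :=
  ∑ i, 1 / π i

variable [DecidableEq ι] {f π : ι → ℝ} {B : ℝ}

lemma exists_totalWeight_lt_of_budget_lt (hπ : π ∈ allocations f B)
    (hslack : ∑ k, f k * π k < B) {i : ι} (hi : π i < 1) :
    ∃ π' ∈ allocations f B, totalWeight π' < totalWeight π := by
  have hnear : ∀ᶠ x in 𝓝 (π i), x < 1 ∧ f i * x - f i * π i < B - ∑ k, f k * π k :=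
    (continuousAt_id.eventually_lt continuousAt_const hi).and <|
      ContinuousAt.eventually_lt (by fun_prop) continuousAt_const (by simpa using hslack)
  obtain ⟨x, ⟨hx1, hxB⟩, hix⟩ :=
    ((hnear.filter_mono nhdsWithin_le_nhds).and self_mem_nhdsWithin).exists (f := 𝓝[>] (π i))
  have hx0 : 0 < x := (hπ.1 i).1.trans hix
  refine ⟨update π i x, ⟨?_, ?_⟩, ?_⟩
  · exact (forall_update_iff π fun k y => y ∈ Set.Ioc 0 1).2 ⟨⟨hx0, hx1.le⟩, fun k _ => hπ.1 k⟩
  · have := Fintype.sum_apply_update_sub (fun k y => f k * y) π i x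
    linarith
  · have := Fintype.sum_apply_update_sub (fun _ y => 1 / y) π i x
    have : 1 / x < 1 / π i := one_div_lt_one_div_of_lt (hπ.1 i).1 hix
    unfold totalWeight
    linarith

lemma exists_totalWeight_lt_of_exchange (hπ : π ∈ allocations f B) {i j : ι} (hij : i ≠ j)
    (hi : π i < 1) (hfi : 0 ≤ f i) (hkey : f i * π i ^ 2 < f j * π j ^ 2) :
    ∃ π' ∈ allocations f B, totalWeight π' < totalWeight π := by
  set a := π i
  set b := π j
  have hnear : ∀ᶠ s in 𝓝 (0 : ℝ), a + f j * s < 1 ∧ 0 < a + f j * s ∧ 0 < b - f i * s ∧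
      f i * a * (a + f j * s) < f j * b * (b - f i * s) := by
    refine .and ?_ (.and ?_ (.and ?_ ?_)) <;>
      refine ContinuousAt.eventually_lt (by fun_prop) (by fun_prop) ?_
    · simpa using hi
    · simpa using (hπ.1 i).1
    · simpa using (hπ.1 j).1
    · simpa [sq, mul_assoc] using hkey
  obtain ⟨s, ⟨hx1, hx0, hy0, hgain⟩, hs⟩ :=
    ((hnear.filter_mono nhdsWithin_le_nhds).and self_mem_nhdsWithin).exists (f := 𝓝[>] 0)
  have hy1 : b - f i * s ≤ 1 := by
    have := (hπ.1 j).2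
    nlinarith [mul_nonneg hfi (hs.le)]
  set π₁ := update π i (a + f j * s)
  have hπ₁j : π₁ j = b := update_of_ne hij.symm _ _
  refine ⟨update π₁ j (b - f i * s), ⟨?_, ?_⟩, ?_⟩
  · refine (forall_update_iff π₁ fun k y => y ∈ Set.Ioc 0 1).2 ⟨⟨hy0, hy1⟩, fun k _ => ?_⟩
    exact (forall_update_iff π fun k y => y ∈ Set.Ioc 0 1).2 ⟨⟨hx0, hx1.le⟩, fun k _ => hπ.1 k⟩ k
  · have h₁ := Fintype.sum_apply_update_sub (fun k y => f k * y) π i (a + f j * s)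
    have h₂ := Fintype.sum_apply_update_sub (fun k y => f k * y) π₁ j (b - f i * s)
    simp only [hπ₁j] at h₂
    linarith [hπ.2]
  · have h₁ := Fintype.sum_apply_update_sub (fun _ y => 1 / y) π i (a + f j * s)
    have h₂ := Fintype.sum_apply_update_sub (fun _ y => 1 / y) π₁ j (b - f i * s)
    simp only [hπ₁j] at h₂
    have := one_div_add_one_div_lt_of_exchange (hπ.1 i).1 (hπ.1 j).1 hs hx0 hy0 hgain
    unfold totalWeight
    linarith

lemma min_le_of_isMinOn_totalWeight {M : ℝ} (hM : 0 < M) (hf : ∀ i, 0 < f i)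
    (hfM : ∀ i, f i ≤ M) (hπ : π ∈ allocations f B) (hmin : IsMinOn totalWeight (allocations f B) π)
    (i : ι) : min (B / (Fintype.card ι * M)) 1 ≤ π i := by
  by_contra! hlt
  obtain ⟨hic, hi1⟩ := lt_min_iff.1 hlt
  have hn : (0 : ℝ) < Fintype.card ι := Nat.cast_pos.2 (Fintype.card_pos_iff.2 ⟨i⟩)
  have hMi : M * π i < B / Fintype.card ι := by
    rw [lt_div_iff₀ (mul_pos hn hM)] at hic
    rw [lt_div_iff₀ hn]
    linarith
  have hfi : f i * π i < B / Fintype.card ι :=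
    (mul_le_mul_of_nonneg_right (hfM i) (hπ.1 i).1.le).trans_lt hMi
  obtain ⟨π', hπ', hlt'⟩ : ∃ π' ∈ allocations f B, totalWeight π' < totalWeight π := by
    rcases hπ.2.lt_or_eq with hslack | htight
    · exact exists_totalWeight_lt_of_budget_lt hπ hslack hi1
    obtain ⟨j, hj⟩ : ∃ j, B / Fintype.card ι < f j * π j := by
      by_contra! hle
      have := Finset.sum_lt_sum (fun k _ => hle k) ⟨i, Finset.mem_univ i, hfi⟩
      simp only [Finset.sum_const, Finset.card_univ, nsmul_eq_mul, mul_div_cancel₀ _ hn.ne'] at this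
      exact this.ne htight
    have hij : i ≠ j := by rintro rfl; exact lt_asymm hj hfi
    have hMj : f j * π j ≤ M * π j := mul_le_mul_of_nonneg_right (hfM j) (hπ.1 j).1.le
    have hππ : π i < π j := lt_of_mul_lt_mul_left (by linarith) hM.le
    refine exists_totalWeight_lt_of_exchange hπ hij hi1 (hf i).le ?_
    nlinarith [mul_pos (hf i) (hπ.1 i).1]
  exact not_lt_of_ge (isMinOn_iff.1 hmin π' hπ') hlt'

end BudgetAllocation

theorem stmt_3_general (n : ℕ) (B M : ℝ) (hB : 0 < B) (hM : 0 < M)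
    (f : Fin n → ℝ) (hf : ∀ i, 0 < f i) (hfM : ∀ i, f i ≤ M)
    (πs : Fin n → ℝ) (hπs : ∀ i, πs i ∈ Set.Ioc (0 : ℝ) 1)
    (hπsB : ∑ i, f i * πs i ≤ B)
    (hmin : ∀ π : Fin n → ℝ, (∀ i, π i ∈ Set.Ioc (0 : ℝ) 1) → ∑ i, f i * π i ≤ B →
      (1 / (n : ℝ)) * ∑ i, 1 / πs i ≤ (1 / (n : ℝ)) * ∑ i, 1 / π i) :
    ∀ i, 1 / πs i ≤ max ((n : ℝ) * M / B) 1 ∧ min (B / ((n : ℝ) * M)) 1 ≤ πs i := by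
  intro i
  have hn : (0 : ℝ) < n := Nat.cast_pos.2 i.pos
  have hopt : IsMinOn totalWeight (allocations f B) πs :=
    isMinOn_iff.2 fun π hπ => le_of_mul_le_mul_left (hmin π hπ.1 hπ.2) (by positivity)
  have hlow := min_le_of_isMinOn_totalWeight hM hf hfM ⟨hπs, hπsB⟩ hopt i
  rw [Fintype.card_fin] at hlow
  refine ⟨?_, hlow⟩
  rw [← one_div_div B]
  exact one_div_le_max_of_min_le (hπs i).1 (by positivity) hlow

/-- Maximal weight bound for the optimized budget allocation.
If `π*` minimizes `(1/n) ∑ 1/π_i` over `π ∈ (0,1]^n` subject to `∑ f_i π_i ≤ B`,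
where `0 < f_i ≤ M`, then every coordinate satisfies `π*_i ≥ min(B/(nM), 1)`;
equivalently the induced weight satisfies `1/π*_i ≤ max(nM/B, 1)`. -/
theorem stmt_3 (n : ℕ) (hn : 0 < n) (B M : ℝ) (hB : 0 < B) (hM : 0 < M)
    (f : Fin n → ℝ) (hf : ∀ i, 0 < f i) (hfM : ∀ i, f i ≤ M)
    (πs : Fin n → ℝ) (hπs : ∀ i, πs i ∈ Set.Ioc (0 : ℝ) 1)
    (hπsB : ∑ i, f i * πs i ≤ B)
    (hmin : ∀ π : Fin n → ℝ, (∀ i, π i ∈ Set.Ioc (0 : ℝ) 1) → ∑ i, f i * π i ≤ B →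
      (1 / (n : ℝ)) * ∑ i, 1 / πs i ≤ (1 / (n : ℝ)) * ∑ i, 1 / π i) :
    ∀ i, 1 / πs i ≤ max ((n : ℝ) * M / B) 1 ∧ min (B / ((n : ℝ) * M)) 1 ≤ πs i :=
  stmt_3_general n B M hB hM f hf hfM πs hπs hπsB hmin
end

section
/- Let n be a positive integer and f_1,…,f_n positive reals. For λ > 0 define π_i(λ) = min(1, 1/√(n λ f_i)) and the budget-usage function U(λ) = Σ_{i=1}^n f_i π_i(λ). Then U is continuous and non-increasing on (0,∞), is strictly decreasing at every λ with U(λ) < Σ_{i=1}^n f_i, and satisfies lim_{λ→0⁺} U(λ) = Σ_{i=1}^n f_i and lim_{λ→∞} U(λ) = 0. Consequently, for every B with 0 < B < Σ_{i=1}^n f_i there exists a unique λ* > 0 with U(λ*) = B. -/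
/-!
Each summand `f i * min 1 (1 / √(n λ f i))` equals `f i` for `λ ≤ 1 / (n f i)` and
`f i / √(n λ f i)` beyond that point, so it is continuous and non-increasing in `λ`, tends to
`f i` as `λ → 0⁺` and to `0` as `λ → ∞`, and strictly decreases once it is no longer capped.
If `U λ < ∑ f i`, some summand is already uncapped at `λ`, so `U` strictly decreases from `λ`
on. The intermediate value theorem gives a solution of `U λ = B`, and this strict decrease
below the level `∑ f i` makes it unique.
-/

open Filter Set Topology

noncomputable section

def clippedInvSqrt (x : ℝ) : ℝ := min 1 (1 / √x)

lemma clippedInvSqrt_eq_one {x : ℝ} (hx₀ : 0 < x) (hx₁ : x ≤ 1) : clippedInvSqrt x = 1 :=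
  min_eq_left (one_le_one_div (Real.sqrt_pos.mpr hx₀) (Real.sqrt_le_one.mpr hx₁))

lemma clippedInvSqrt_eq_inv_sqrt {x : ℝ} (hx : 1 ≤ x) : clippedInvSqrt x = (√x)⁻¹ := by
  rw [clippedInvSqrt, one_div,
    min_eq_right (inv_le_one_of_one_le₀ (Real.one_le_sqrt.mpr hx))]

lemma continuousOn_clippedInvSqrt : ContinuousOn clippedInvSqrt (Ioi 0) :=
  continuousOn_const.inf <| continuousOn_const.div Real.continuous_sqrt.continuousOn
    fun _ hx => (Real.sqrt_pos.mpr hx).ne'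

lemma antitoneOn_clippedInvSqrt : AntitoneOn clippedInvSqrt (Ioi 0) := fun _ hx _ _ hxy =>
  min_le_min le_rfl <| one_div_le_one_div_of_le (Real.sqrt_pos.mpr hx) (Real.sqrt_le_sqrt hxy)

lemma strictAntiOn_clippedInvSqrt : StrictAntiOn clippedInvSqrt (Ici 1) := by
  intro x hx y hy hxy
  rw [clippedInvSqrt_eq_inv_sqrt hx, clippedInvSqrt_eq_inv_sqrt hy]
  exact inv_strictAntiOn (Real.sqrt_pos.mpr (zero_lt_one.trans_le hx))
    (Real.sqrt_pos.mpr (zero_lt_one.trans_le hy)) (Real.sqrt_lt_sqrt (zero_le_one.trans hx) hxy)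

lemma tendsto_clippedInvSqrt_nhdsGT_zero : Tendsto clippedInvSqrt (𝓝[>] 0) (𝓝 1) :=
  tendsto_const_nhds.congr' <| eventually_of_mem (Ioc_mem_nhdsGT one_pos) fun _ hx =>
    (clippedInvSqrt_eq_one hx.1 hx.2).symm

lemma tendsto_clippedInvSqrt_atTop : Tendsto clippedInvSqrt atTop (𝓝 0) :=
  (tendsto_inv_atTop_zero.comp Real.tendsto_sqrt_atTop).congr' <|
    eventually_of_mem (Ici_mem_atTop 1) fun _ hx => (clippedInvSqrt_eq_inv_sqrt hx).symm

lemma antitoneOn_clippedInvSqrt_const_mul {c : ℝ} (hc : 0 < c) :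
    AntitoneOn (fun lam => clippedInvSqrt (c * lam)) (Ioi 0) := fun _ ha _ hb hab =>
  antitoneOn_clippedInvSqrt (mul_pos hc ha) (mul_pos hc hb) (mul_le_mul_of_nonneg_left hab hc.le)

lemma tendsto_const_mul_nhdsGT_zero {c : ℝ} (hc : 0 < c) :
    Tendsto (c * ·) (𝓝[>] 0) (𝓝[>] 0) :=
  tendsto_iff_comap.mpr (comap_mulLeft_nhdsGT_zero hc).ge

lemma existsUnique_pos_eq_of_tendsto {U : ℝ → ℝ} {S B : ℝ} (hcont : ContinuousOn U (Ioi 0))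
    (hstrict : ∀ a b, 0 < a → a < b → U a < S → U b < U a)
    (h0 : Tendsto U (𝓝[>] 0) (𝓝 S)) (htop : Tendsto U atTop (𝓝 0)) (hB : 0 < B) (hBS : B < S) :
    ∃! lam, 0 < lam ∧ U lam = B := by
  obtain ⟨a, hBa, ha⟩ := ((h0.eventually (lt_mem_nhds hBS)).and self_mem_nhdsWithin).exists
  obtain ⟨b, hbB, hab⟩ := ((htop.eventually (gt_mem_nhds hB)).and (eventually_ge_atTop a)).exists
  obtain ⟨lam, hlam, hUlam⟩ := intermediate_value_Icc' hab
    (hcont.mono fun _ hx => ha.trans_le hx.1) ⟨hbB.le, hBa.le⟩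
  have hlam₀ : 0 < lam := ha.trans_le hlam.1
  refine ⟨lam, ⟨hlam₀, hUlam⟩, fun y ⟨hy, hUy⟩ => ?_⟩
  by_contra hne
  rcases lt_or_gt_of_ne hne with h | h
  · exact (hstrict y lam hy h (hUy ▸ hBS)).ne (hUlam.trans hUy.symm)
  · exact (hstrict lam y hlam₀ h (hUlam ▸ hBS)).ne (hUy.trans hUlam.symm)

section BudgetUsage

variable {ι : Type*} [Fintype ι] {w c : ι → ℝ}

def budgetUsage (w c : ι → ℝ) (lam : ℝ) : ℝ := ∑ i, w i * clippedInvSqrt (c i * lam)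

lemma continuousOn_budgetUsage (hc : ∀ i, 0 < c i) : ContinuousOn (budgetUsage w c) (Ioi 0) :=
  continuousOn_finsetSum _ fun i _ => continuousOn_const.mul <|
    continuousOn_clippedInvSqrt.comp (continuousOn_const.mul continuousOn_id)
      fun _ hx => mul_pos (hc i) hx

lemma antitoneOn_budgetUsage (hw : ∀ i, 0 ≤ w i) (hc : ∀ i, 0 < c i) :
    AntitoneOn (budgetUsage w c) (Ioi 0) := fun _ ha _ hb hab =>
  Finset.sum_le_sum fun i _ =>
    mul_le_mul_of_nonneg_left (antitoneOn_clippedInvSqrt_const_mul (hc i) ha hb hab) (hw i)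

lemma budgetUsage_lt_of_lt_sum (hw : ∀ i, 0 < w i) (hc : ∀ i, 0 < c i) {a b : ℝ}
    (ha : 0 < a) (hab : a < b) (hU : budgetUsage w c a < ∑ i, w i) :
    budgetUsage w c b < budgetUsage w c a := by
  obtain ⟨i, -, hi⟩ := Finset.exists_lt_of_sum_lt hU
  have hclip : clippedInvSqrt (c i * a) < 1 := by
    simpa using lt_of_mul_lt_mul_left (hi.trans_eq (mul_one (w i)).symm) (hw i).le
  have hsat : 1 < c i * a := by
    by_contra! h
    exact hclip.ne (clippedInvSqrt_eq_one (mul_pos (hc i) ha) h)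
  have hb : 0 < b := ha.trans hab
  have hcab : c i * a < c i * b := mul_lt_mul_of_pos_left hab (hc i)
  refine Finset.sum_lt_sum (fun j _ => mul_le_mul_of_nonneg_left
    (antitoneOn_clippedInvSqrt_const_mul (hc j) ha hb hab.le) (hw j).le) ⟨i, Finset.mem_univ i, ?_⟩
  exact mul_lt_mul_of_pos_left
    (strictAntiOn_clippedInvSqrt hsat.le (hsat.trans hcab).le hcab) (hw i)

lemma tendsto_budgetUsage_nhdsGT_zero (hc : ∀ i, 0 < c i) :
    Tendsto (budgetUsage w c) (𝓝[>] 0) (𝓝 (∑ i, w i)) := by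
  have h := tendsto_finsetSum Finset.univ fun i _ =>
    (tendsto_clippedInvSqrt_nhdsGT_zero.comp (tendsto_const_mul_nhdsGT_zero (hc i))).const_mul (w i)
  simp only [mul_one] at h
  exact h

lemma tendsto_budgetUsage_atTop (hc : ∀ i, 0 < c i) :
    Tendsto (budgetUsage w c) atTop (𝓝 0) := by
  have h := tendsto_finsetSum Finset.univ fun i _ =>
    (tendsto_clippedInvSqrt_atTop.comp (tendsto_id.const_mul_atTop (hc i))).const_mul (w i)
  simp only [mul_zero, Finset.sum_const_zero] at h
  exact h

end BudgetUsage

end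

theorem stmt_5_general (n : ℕ) (f : Fin n → ℝ) (hf : ∀ i, 0 < f i)
    (U : ℝ → ℝ)
    (hU : U = fun lam => ∑ i, f i * min 1 (1 / Real.sqrt ((n : ℝ) * lam * f i))) :
    ContinuousOn U (Set.Ioi 0) ∧
    AntitoneOn U (Set.Ioi 0) ∧
    (∀ lam₁ lam₂ : ℝ, 0 < lam₁ → lam₁ < lam₂ → U lam₁ < ∑ i, f i → U lam₂ < U lam₁) ∧
    Tendsto U (nhdsWithin 0 (Set.Ioi 0)) (nhds (∑ i, f i)) ∧
    Tendsto U atTop (nhds 0) ∧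
    (∀ B : ℝ, 0 < B → B < ∑ i, f i → ∃! lam : ℝ, 0 < lam ∧ U lam = B) := by
  have hc : ∀ i : Fin n, 0 < (n : ℝ) * f i := fun i => mul_pos (Nat.cast_pos.mpr i.pos) (hf i)
  obtain rfl : U = budgetUsage f fun i => n * f i := by
    rw [hU]
    ext lam
    simp only [budgetUsage, clippedInvSqrt, mul_right_comm]
  have hcont := continuousOn_budgetUsage (w := f) hc
  have hzero := tendsto_budgetUsage_nhdsGT_zero (w := f) hc
  have htop := tendsto_budgetUsage_atTop (w := f) hc
  exact ⟨hcont, antitoneOn_budgetUsage (fun i => (hf i).le) hc,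
    fun _ _ => budgetUsage_lt_of_lt_sum hf hc, hzero, htop, fun _ =>
      existsUnique_pos_eq_of_tendsto hcont (fun _ _ => budgetUsage_lt_of_lt_sum hf hc) hzero htop⟩

/-- Properties of the budget-usage function
`U(λ) = ∑ f_i · min(1, 1/√(n λ f_i))`: it is continuous and non-increasing on `(0,∞)`,
strictly decreasing at every `λ` with `U(λ) < ∑ f_i`, tends to `∑ f_i` as `λ → 0⁺`
and to `0` as `λ → ∞`; consequently, for every `0 < B < ∑ f_i` there is a unique
`λ* > 0` with `U(λ*) = B`. -/
theorem stmt_5 (n : ℕ) (hn : 0 < n) (f : Fin n → ℝ) (hf : ∀ i, 0 < f i)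
    (U : ℝ → ℝ)
    (hU : U = fun lam => ∑ i, f i * min 1 (1 / Real.sqrt ((n : ℝ) * lam * f i))) :
    ContinuousOn U (Set.Ioi 0) ∧
    AntitoneOn U (Set.Ioi 0) ∧
    (∀ lam₁ lam₂ : ℝ, 0 < lam₁ → lam₁ < lam₂ → U lam₁ < ∑ i, f i → U lam₂ < U lam₁) ∧
    Tendsto U (nhdsWithin 0 (Set.Ioi 0)) (nhds (∑ i, f i)) ∧
    Tendsto U atTop (nhds 0) ∧
    (∀ B : ℝ, 0 < B → B < ∑ i, f i → ∃! lam : ℝ, 0 < lam ∧ U lam = B) :=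
  stmt_5_general n f hf U hU
end

section
/- Let n be a positive integer, let f_1,…,f_n be positive reals, and let B satisfy 0 < B < Σ_{i=1}^n f_i. Let λ* > 0 be the unique solution of U(λ*) = B, where U(λ) = Σ_{i=1}^n f_i · min(1, 1/√(n λ f_i)). Then the vector π* with coordinates π*_i = min(1, 1/√(n λ* f_i)) is the unique minimizer of (1/n) Σ_{i=1}^n 1/π_i over π ∈ (0,1]^n subject to Σ_{i=1}^n f_i π_i ≤ B. -/
/-! For the multiplier `μ = n λ* > 0` the Lagrangian `∑ i, (1 / x i + μ f i x i)` separates into scalar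
problems: on `(0, 1]` the function `x ↦ 1 / x + c x` is uniquely minimized at the clipped
stationary point `min 1 (1 / √c)`. Hence `π*` minimizes the Lagrangian uniquely, and since `π*`
exhausts the budget, every feasible `π` with `π ≠ π*` has `∑ 1 / π*_i < ∑ 1 / π_i`. -/

open Finset

/-- The minimizer of the Lagrangian with multiplier `μ` for the cost vector `f`. -/
noncomputable def optAlloc {ι : Type*} (μ : ℝ) (f : ι → ℝ) : ι → ℝ :=
  fun i => min 1 (1 / √(μ * f i))

theorem min_one_one_div_sqrt_mem_Ioc {c : ℝ} (hc : 0 < c) : min 1 (1 / √c) ∈ Set.Ioc 0 1 :=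
  ⟨lt_min one_pos (by positivity), min_le_left _ _⟩

theorem one_div_add_mul_min_lt {c x : ℝ} (hc : 0 < c) (hx : x ∈ Set.Ioc 0 1)
    (hne : x ≠ min 1 (1 / √c)) :
    1 / min 1 (1 / √c) + c * min 1 (1 / √c) < 1 / x + c * x := by
  obtain ⟨hx0, hx1⟩ := hx
  have hs : 0 < √c := Real.sqrt_pos.mpr hc
  have hsq : √c ^ 2 = c := Real.sq_sqrt hc.le
  rcases le_or_gt 1 √c with h1 | h1
  · have hp : min 1 (1 / √c) = 1 / √c := min_eq_right ((div_le_one hs).mpr h1)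
    rw [hp] at hne ⊢
    have hsx : √c * x - 1 ≠ 0 := by
      intro h; apply hne; field_simp; linarith
    have hpos : 0 < (√c * x - 1) ^ 2 / x := by positivity
    have hgap : 1 / x + c * x - (1 / (1 / √c) + c * (1 / √c)) = (√c * x - 1) ^ 2 / x := by
      field_simp
      linear_combination (x - x ^ 2 * √c) * hsq
    linarith
  · have hp : min 1 (1 / √c) = 1 := min_eq_left ((le_div_iff₀ hs).mpr (by linarith))
    rw [hp] at hne ⊢
    have hxlt : x < 1 := lt_of_le_of_ne hx1 hne
    have hcx : c * x < 1 := by nlinarith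
    have hpos : 0 < (1 - x) * (1 - c * x) / x :=
      div_pos (mul_pos (by linarith) (by linarith)) hx0
    have hgap : 1 / x + c * x - (1 / 1 + c * 1) = (1 - x) * (1 - c * x) / x := by
      field_simp; ring
    linarith

theorem one_div_add_mul_min_le {c x : ℝ} (hc : 0 < c) (hx : x ∈ Set.Ioc 0 1) :
    1 / min 1 (1 / √c) + c * min 1 (1 / √c) ≤ 1 / x + c * x := by
  rcases eq_or_ne x (min 1 (1 / √c)) with rfl | hne
  · exact le_rfl
  · exact (one_div_add_mul_min_lt hc hx hne).le

namespace optAlloc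

variable {ι : Type*} {μ : ℝ} {f x : ι → ℝ}

theorem mem_Ioc (hμ : 0 < μ) (hf : ∀ i, 0 < f i) (i : ι) : optAlloc μ f i ∈ Set.Ioc 0 1 :=
  min_one_one_div_sqrt_mem_Ioc (mul_pos hμ (hf i))

variable [Fintype ι]

theorem lagrangian_le (hμ : 0 < μ) (hf : ∀ i, 0 < f i) (hx : ∀ i, x i ∈ Set.Ioc 0 1) :
    ∑ i, (1 / optAlloc μ f i + μ * f i * optAlloc μ f i) ≤ ∑ i, (1 / x i + μ * f i * x i) :=
  sum_le_sum fun i _ => one_div_add_mul_min_le (mul_pos hμ (hf i)) (hx i)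

theorem lagrangian_lt (hμ : 0 < μ) (hf : ∀ i, 0 < f i) (hx : ∀ i, x i ∈ Set.Ioc 0 1)
    (hne : x ≠ optAlloc μ f) :
    ∑ i, (1 / optAlloc μ f i + μ * f i * optAlloc μ f i) < ∑ i, (1 / x i + μ * f i * x i) := by
  obtain ⟨j, hj⟩ := Function.ne_iff.mp hne
  exact sum_lt_sum (fun i _ => one_div_add_mul_min_le (mul_pos hμ (hf i)) (hx i))
    ⟨j, mem_univ j, one_div_add_mul_min_lt (mul_pos hμ (hf j)) (hx j) hj⟩

theorem lagrangian_eq (g : ι → ℝ) :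
    ∑ i, (1 / g i + μ * f i * g i) = ∑ i, 1 / g i + μ * ∑ i, f i * g i := by
  simp only [sum_add_distrib, mul_sum, mul_assoc]

theorem sum_one_div_le (hμ : 0 < μ) (hf : ∀ i, 0 < f i) (hx : ∀ i, x i ∈ Set.Ioc 0 1)
    (hbudget : ∑ i, f i * x i ≤ ∑ i, f i * optAlloc μ f i) :
    ∑ i, 1 / optAlloc μ f i ≤ ∑ i, 1 / x i := by
  have h := lagrangian_le hμ hf hx
  rw [lagrangian_eq, lagrangian_eq] at h
  linarith [mul_le_mul_of_nonneg_left hbudget hμ.le]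

theorem sum_one_div_lt (hμ : 0 < μ) (hf : ∀ i, 0 < f i) (hx : ∀ i, x i ∈ Set.Ioc 0 1)
    (hbudget : ∑ i, f i * x i ≤ ∑ i, f i * optAlloc μ f i) (hne : x ≠ optAlloc μ f) :
    ∑ i, 1 / optAlloc μ f i < ∑ i, 1 / x i := by
  have h := lagrangian_lt hμ hf hx hne
  rw [lagrangian_eq, lagrangian_eq] at h
  linarith [mul_le_mul_of_nonneg_left hbudget hμ.le]

end optAlloc

theorem stmt_6_general (n : ℕ) (hn : 0 < n) (B : ℝ)
    (f : Fin n → ℝ) (hf : ∀ i, 0 < f i)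
    (lam : ℝ) (hlam : 0 < lam)
    (hUlam : ∑ i, f i * min 1 (1 / Real.sqrt ((n : ℝ) * lam * f i)) = B)
    (πs : Fin n → ℝ) (hπs : πs = fun i => min 1 (1 / Real.sqrt ((n : ℝ) * lam * f i))) :
    (∀ i, πs i ∈ Set.Ioc (0 : ℝ) 1) ∧
    (∑ i, f i * πs i ≤ B) ∧
    (∀ π : Fin n → ℝ, (∀ i, π i ∈ Set.Ioc (0 : ℝ) 1) → ∑ i, f i * π i ≤ B →
      (1 / (n : ℝ)) * ∑ i, 1 / πs i ≤ (1 / (n : ℝ)) * ∑ i, 1 / π i) ∧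
    (∀ π : Fin n → ℝ, (∀ i, π i ∈ Set.Ioc (0 : ℝ) 1) → ∑ i, f i * π i ≤ B →
      (1 / (n : ℝ)) * ∑ i, 1 / π i = (1 / (n : ℝ)) * ∑ i, 1 / πs i → π = πs) := by
  have hn_inv : (0 : ℝ) < 1 / n := by positivity
  have hμ : (0 : ℝ) < n * lam := by positivity
  change πs = optAlloc (n * lam) f at hπs
  change ∑ i, f i * optAlloc (n * lam) f i = B at hUlam
  subst hπs
  refine ⟨optAlloc.mem_Ioc hμ hf, hUlam.le, fun π hπ hπB => ?_, fun π hπ hπB heq => ?_⟩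
  · exact mul_le_mul_of_nonneg_left (optAlloc.sum_one_div_le hμ hf hπ (hUlam ▸ hπB)) hn_inv.le
  · by_contra hne
    have hlt := optAlloc.sum_one_div_lt hμ hf hπ (hUlam ▸ hπB) hne
    exact (mul_lt_mul_of_pos_left hlt hn_inv).ne' heq

/-- Let `0 < B < ∑ f_i` and let `λ* > 0` solve `U(λ*) = B`, where
`U(λ) = ∑ f_i · min(1, 1/√(n λ f_i))`. Then `π*` with `π*_i = min(1, 1/√(n λ* f_i))`
is the unique minimizer of `(1/n) ∑ 1/π_i` over `π ∈ (0,1]^n` with `∑ f_i π_i ≤ B`. -/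
theorem stmt_6 (n : ℕ) (hn : 0 < n) (B : ℝ) (hB : 0 < B)
    (f : Fin n → ℝ) (hf : ∀ i, 0 < f i) (hBf : B < ∑ i, f i)
    (lam : ℝ) (hlam : 0 < lam)
    (hUlam : ∑ i, f i * min 1 (1 / Real.sqrt ((n : ℝ) * lam * f i)) = B)
    (πs : Fin n → ℝ) (hπs : πs = fun i => min 1 (1 / Real.sqrt ((n : ℝ) * lam * f i))) :
    (∀ i, πs i ∈ Set.Ioc (0 : ℝ) 1) ∧
    (∑ i, f i * πs i ≤ B) ∧
    (∀ π : Fin n → ℝ, (∀ i, π i ∈ Set.Ioc (0 : ℝ) 1) → ∑ i, f i * π i ≤ B →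
      (1 / (n : ℝ)) * ∑ i, 1 / πs i ≤ (1 / (n : ℝ)) * ∑ i, 1 / π i) ∧
    (∀ π : Fin n → ℝ, (∀ i, π i ∈ Set.Ioc (0 : ℝ) 1) → ∑ i, f i * π i ≤ B →
      (1 / (n : ℝ)) * ∑ i, 1 / π i = (1 / (n : ℝ)) * ∑ i, 1 / πs i → π = πs) :=
  stmt_6_general n hn B f hf lam hlam hUlam πs hπs
end

section
/- Let ((X_i, T_i, C_i))_{i=1}^n be random triples such that for every i, C_i is conditionally independent of T_i given (X_1,…,X_n). Fix τ and a measurable function q̂_τ, and define the weights w(i) = 1 / P(q̂_τ(X_i) ≤ C_i | X_1,…,X_n), assumed almost surely finite. Then the weighted miscoverage estimator α̂(τ) = (1/n) Σ_{i=1}^n w(i) · 1{q̂_τ(X_i) ≤ C_i} · 1{T_i < q̂_τ(X_i)} is unbiased: E[α̂(τ)] = (1/n) Σ_{i=1}^n P(T_i < q̂_τ(X_i)). -/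
/-! Inverse-probability weighting. Fix `i`, let `A = {q̂(Xᵢ) ≤ Cᵢ}`, `B = {Tᵢ < q̂(Xᵢ)}` and
`p = P(A | X)`. The event `A` lies in `σ(X) ⊔ σ(Cᵢ)` and `B` in `σ(X) ⊔ σ(Tᵢ)`, and conditional
independence of two σ-algebras given `σ(X)` survives adjoining `σ(X)` to each of them, so
`P(A ∩ B | X) = p · P(B | X)`. As `p⁻¹` is `σ(X)`-measurable,
`E[p⁻¹ 1_{A ∩ B}] = E[p⁻¹ P(A ∩ B | X)] = E[P(B | X)] = P(B)`.
The computation is done with lower Lebesgue integrals, where the unbounded weight `p⁻¹` needs no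
integrability; the finite value `P(B)` then gives integrability of the real integrand. -/

open MeasureTheory ProbabilityTheory MeasurableSpace Set
open scoped ENNReal ProbabilityTheory

section CondExpIndicator

variable {Ω : Type*} {m mΩ : MeasurableSpace Ω} {μ : Measure Ω} [IsFiniteMeasure μ] {E : Set Ω}

theorem setLIntegral_ofReal_condExp_indicator (hm : m ≤ mΩ) (hE : MeasurableSet E) {G : Set Ω}
    (hG : MeasurableSet[m] G) :
    ∫⁻ ω in G, ENNReal.ofReal ((μ⟦E|m⟧) ω) ∂μ = μ (E ∩ G) := by
  have hE_int : Integrable (E.indicator fun _ => (1 : ℝ)) μ := (integrable_const 1).indicator hE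
  rw [← ofReal_integral_eq_lintegral_ofReal integrable_condExp.integrableOn
      (ae_restrict_of_ae (condExp_nonneg (ae_of_all _ (indicator_nonneg fun _ _ => zero_le_one)))),
    setIntegral_condExp hm hE_int hG, integral_indicator hE, Measure.restrict_restrict hE]
  simp [Measure.real, measure_ne_top]

theorem trim_restrict_eq_trim_withDensity_condExp (hm : m ≤ mΩ) (hE : MeasurableSet E) :
    (μ.restrict E).trim hm = (μ.withDensity fun ω => ENNReal.ofReal ((μ⟦E|m⟧) ω)).trim hm := by
  refine @Measure.ext Ω m _ _ fun G hG => ?_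
  rw [trim_measurableSet_eq hm hG, trim_measurableSet_eq hm hG, Measure.restrict_apply (hm G hG),
    withDensity_apply _ (hm G hG), setLIntegral_ofReal_condExp_indicator hm hE hG, inter_comm]

theorem lintegral_mul_indicator_eq_lintegral_mul_condExp (hm : m ≤ mΩ) {h : Ω → ℝ≥0∞}
    (hh : Measurable[m] h) (hE : MeasurableSet E) :
    ∫⁻ ω, h ω * E.indicator 1 ω ∂μ = ∫⁻ ω, h ω * ENNReal.ofReal ((μ⟦E|m⟧) ω) ∂μ := by
  have hdens : Measurable fun ω => ENNReal.ofReal ((μ⟦E|m⟧) ω) :=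
    ENNReal.measurable_ofReal.comp (stronglyMeasurable_condExp.measurable.mono hm le_rfl)
  calc ∫⁻ ω, h ω * E.indicator 1 ω ∂μ = ∫⁻ ω, h ω ∂((μ.restrict E).trim hm) := by
        rw [lintegral_trim hm hh, ← lintegral_indicator hE]
        simp_rw [← indicator_mul_right, Pi.one_apply, mul_one]
    _ = ∫⁻ ω, h ω ∂((μ.withDensity fun ω => ENNReal.ofReal ((μ⟦E|m⟧) ω)).trim hm) := by
        rw [trim_restrict_eq_trim_withDensity_condExp hm hE]
    _ = ∫⁻ ω, h ω * ENNReal.ofReal ((μ⟦E|m⟧) ω) ∂μ := by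
        rw [lintegral_trim hm hh, lintegral_withDensity_eq_lintegral_mul _ hdens (hh.mono hm le_rfl)]
        simp only [Pi.mul_apply, mul_comm]

theorem condExp_inter_ae_eq_indicator (hE : MeasurableSet E) {G : Set Ω} (hG : MeasurableSet[m] G) :
    μ⟦G ∩ E|m⟧ =ᵐ[μ] G.indicator (μ⟦E|m⟧) := by
  rw [← indicator_indicator]
  exact condExp_indicator ((integrable_const 1).indicator hE) hG

end CondExpIndicator

theorem isPiSystem_image2_inter_measurableSet {Ω : Type*} (m₁ m₂ : MeasurableSpace Ω) :
    IsPiSystem (image2 (· ∩ ·) {s | MeasurableSet[m₁] s} {s | MeasurableSet[m₂] s}) := by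
  rintro _ ⟨s₁, hs₁, t₁, ht₁, rfl⟩ _ ⟨s₂, hs₂, t₂, ht₂, rfl⟩ -
  refine ⟨s₁ ∩ s₂, hs₁.inter hs₂, t₁ ∩ t₂, ht₁.inter ht₂, ?_⟩
  simp only [inter_inter_inter_comm]

theorem sup_eq_generateFrom_image2_inter {Ω : Type*} (m₁ m₂ : MeasurableSpace Ω) :
    m₁ ⊔ m₂ = generateFrom (image2 (· ∩ ·) {s | MeasurableSet[m₁] s} {s | MeasurableSet[m₂] s}) := by
  refine le_antisymm (sup_le (fun s hs => ?_) (fun t ht => ?_)) (generateFrom_le ?_)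
  · exact measurableSet_generateFrom ⟨s, hs, univ, MeasurableSet.univ, inter_univ s⟩
  · exact measurableSet_generateFrom ⟨univ, MeasurableSet.univ, t, ht, univ_inter t⟩
  · rintro _ ⟨s, hs, t, ht, rfl⟩
    exact (le_sup_left (b := m₂) s hs).inter (le_sup_right (a := m₁) t ht)

namespace ProbabilityTheory

variable {Ω : Type*} {m' m₁ m₂ mΩ : MeasurableSpace Ω} [StandardBorelSpace Ω] {hm' : m' ≤ mΩ}
  {μ : Measure Ω} [IsFiniteMeasure μ]

theorem CondIndep.sup_left (h : CondIndep m' m₁ m₂ hm' μ) (hm₁ : m₁ ≤ mΩ) (hm₂ : m₂ ≤ mΩ) :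
    CondIndep m' (m' ⊔ m₁) m₂ hm' μ := by
  refine CondIndepSets.condIndep (sup_le hm' hm₁) hm₂ (isPiSystem_image2_inter_measurableSet m' m₁)
    (@isPiSystem_measurableSet Ω m₂) (sup_eq_generateFrom_image2_inter m' m₁)
    (@generateFrom_measurableSet Ω m₂).symm ?_
  rw [condIndepSets_iff _ _ _ {s | MeasurableSet[m₂] s} ?meas₁ (fun t ht => hm₂ t ht)]
  case meas₁ =>
    rintro _ ⟨G, hG, s, hs, rfl⟩
    exact (hm' G hG).inter (hm₁ s hs)
  rintro _ t ⟨G, hG, s, hs, rfl⟩ ht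
  have hs' : MeasurableSet[mΩ] s := hm₁ s hs
  have ht' : MeasurableSet[mΩ] t := hm₂ t ht
  calc μ⟦G ∩ s ∩ t|m'⟧ = μ⟦G ∩ (s ∩ t)|m'⟧ := by rw [inter_assoc]
    _ =ᵐ[μ] G.indicator (μ⟦s ∩ t|m'⟧) := condExp_inter_ae_eq_indicator (hs'.inter ht') hG
    _ =ᵐ[μ] G.indicator (μ⟦s|m'⟧ * μ⟦t|m'⟧) := by
        filter_upwards [(condIndep_iff _ _ _ hm' hm₁ hm₂ μ).mp h s t hs ht] with ω hω
        simp only [indicator, hω]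
    _ = G.indicator (μ⟦s|m'⟧) * μ⟦t|m'⟧ := by
        ext ω; exact indicator_mul_left G _ _
    _ =ᵐ[μ] μ⟦G ∩ s|m'⟧ * μ⟦t|m'⟧ := (condExp_inter_ae_eq_indicator hs' hG).symm.mul (ae_eq_refl _)

theorem CondIndep.sup_sup (h : CondIndep m' m₁ m₂ hm' μ) (hm₁ : m₁ ≤ mΩ) (hm₂ : m₂ ≤ mΩ) :
    CondIndep m' (m' ⊔ m₁) (m' ⊔ m₂) hm' μ :=
  ((h.sup_left hm₁ hm₂).symm.sup_left hm₂ (sup_le hm' hm₁)).symm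

theorem lintegral_ofReal_inv_condExp_mul_indicator_inter {A B : Set Ω} (hA : MeasurableSet A)
    (hB : MeasurableSet B) (hAB : CondIndepSet m' hm' A B μ) (hpos : ∀ᵐ ω ∂μ, 0 < (μ⟦A|m'⟧) ω) :
    ∫⁻ ω, ENNReal.ofReal ((μ⟦A|m'⟧) ω)⁻¹ * (A ∩ B).indicator 1 ω ∂μ = μ B := by
  have hW : Measurable[m'] fun ω => ENNReal.ofReal ((μ⟦A|m'⟧) ω)⁻¹ :=
    ENNReal.measurable_ofReal.comp stronglyMeasurable_condExp.measurable.inv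
  calc ∫⁻ ω, ENNReal.ofReal ((μ⟦A|m'⟧) ω)⁻¹ * (A ∩ B).indicator 1 ω ∂μ
      = ∫⁻ ω, ENNReal.ofReal ((μ⟦A|m'⟧) ω)⁻¹ * ENNReal.ofReal ((μ⟦A ∩ B|m'⟧) ω) ∂μ :=
        lintegral_mul_indicator_eq_lintegral_mul_condExp hm' hW (hA.inter hB)
    _ = ∫⁻ ω, 1 * ENNReal.ofReal ((μ⟦B|m'⟧) ω) ∂μ := by
        refine lintegral_congr_ae ?_
        filter_upwards [(condIndepSet_iff m' hm' A B hA hB μ).mp hAB, hpos] with ω hfac hp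
        rw [hfac, Pi.mul_apply, ← ENNReal.ofReal_mul (inv_nonneg.2 hp.le), ← mul_assoc,
          inv_mul_cancel₀ hp.ne', one_mul, one_mul]
    _ = ∫⁻ ω, 1 * B.indicator 1 ω ∂μ :=
        (lintegral_mul_indicator_eq_lintegral_mul_condExp hm' measurable_const hB).symm
    _ = μ B := by simp only [one_mul, lintegral_indicator_one hB]

theorem integral_inv_condExp_mul_indicator_mul_indicator {A B : Set Ω} (hA : MeasurableSet A)
    (hB : MeasurableSet B) (hAB : CondIndepSet m' hm' A B μ) (hpos : ∀ᵐ ω ∂μ, 0 < (μ⟦A|m'⟧) ω) :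
    Integrable (fun ω => ((μ⟦A|m'⟧) ω)⁻¹ * A.indicator 1 ω * B.indicator 1 ω) μ ∧
      ∫ ω, ((μ⟦A|m'⟧) ω)⁻¹ * A.indicator 1 ω * B.indicator 1 ω ∂μ = μ.real B := by
  set f : Ω → ℝ := fun ω => ((μ⟦A|m'⟧) ω)⁻¹ * A.indicator 1 ω * B.indicator 1 ω
  have hf_meas : Measurable f :=
    ((stronglyMeasurable_condExp.measurable.mono hm' le_rfl).inv.mul
      (measurable_one.indicator hA)).mul (measurable_one.indicator hB)
  have hf_nonneg : 0 ≤ᵐ[μ] f := by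
    filter_upwards [hpos] with ω hp
    have h_ind : ∀ s : Set Ω, 0 ≤ s.indicator (1 : Ω → ℝ) ω :=
      fun s => indicator_nonneg (fun _ _ => zero_le_one) ω
    exact mul_nonneg (mul_nonneg (inv_nonneg.2 hp.le) (h_ind A)) (h_ind B)
  have hf_lintegral : ∫⁻ ω, ENNReal.ofReal (f ω) ∂μ = μ B := by
    rw [← lintegral_ofReal_inv_condExp_mul_indicator_inter hA hB hAB hpos]
    refine lintegral_congr fun ω => ?_
    by_cases hAω : ω ∈ A <;> by_cases hBω : ω ∈ B <;> simp [f, hAω, hBω]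
  refine ⟨⟨hf_meas.aestronglyMeasurable, ?_⟩, ?_⟩
  · rw [hasFiniteIntegral_iff_ofReal hf_nonneg, hf_lintegral]
    exact measure_lt_top μ B
  · rw [integral_eq_lintegral_of_nonneg_ae hf_nonneg hf_meas.aestronglyMeasurable, hf_lintegral,
      measureReal_def]

theorem CondIndepFun.condIndepSet_le_lt {C T f : Ω → ℝ} (hC : Measurable C) (hT : Measurable T)
    (hCT : CondIndepFun m' hm' C T μ) (hf : Measurable[m'] f) :
    CondIndepSet m' hm' {ω | f ω ≤ C ω} {ω | T ω < f ω} μ := by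
  have h : CondIndep m' (m' ⊔ MeasurableSpace.comap C inferInstance)
      (m' ⊔ MeasurableSpace.comap T inferInstance) hm' μ :=
    CondIndep.sup_sup hCT hC.comap_le hT.comap_le
  exact h.condIndepSet_of_measurableSet
    (measurableSet_le (hf.mono le_sup_left le_rfl) ((comap_measurable C).mono le_sup_right le_rfl))
    (measurableSet_lt ((comap_measurable T).mono le_sup_right le_rfl) (hf.mono le_sup_left le_rfl))

theorem integral_inv_condExp_le_mul_ite_mul_ite {C T f : Ω → ℝ} (hC : Measurable C)
    (hT : Measurable T) (hCT : CondIndepFun m' hm' C T μ) (hf : Measurable[m'] f)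
    (hpos : ∀ᵐ ω ∂μ, 0 < (μ⟦{ω | f ω ≤ C ω}|m'⟧) ω) :
    Integrable (fun ω => ((μ⟦{ω | f ω ≤ C ω}|m'⟧) ω)⁻¹ * (if f ω ≤ C ω then 1 else 0) *
        (if T ω < f ω then 1 else 0)) μ ∧
      ∫ ω, ((μ⟦{ω | f ω ≤ C ω}|m'⟧) ω)⁻¹ * (if f ω ≤ C ω then 1 else 0) *
        (if T ω < f ω then 1 else 0) ∂μ = μ.real {ω | T ω < f ω} := by
  have hf' : Measurable f := hf.mono hm' le_rfl
  simpa only [indicator_apply, mem_ofPred_eq, Pi.one_apply] using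
    integral_inv_condExp_mul_indicator_mul_indicator (measurableSet_le hf' hC)
      (measurableSet_lt hT hf') (CondIndepFun.condIndepSet_le_lt hC hT hCT hf) hpos

end ProbabilityTheory

theorem stmt_7_general {Ω 𝒳 : Type*} [mΩ : MeasurableSpace Ω] [StandardBorelSpace Ω]
    [MeasurableSpace 𝒳]
    (μ : Measure Ω) [IsProbabilityMeasure μ]
    (n : ℕ)
    (X : Fin n → Ω → 𝒳)
    (T : Fin n → Ω → ℕ) (hTmeas : ∀ i, Measurable (T i))
    (C : Fin n → Ω → ℕ) (hCmeas : ∀ i, Measurable (C i))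
    (qhat : 𝒳 → ℝ) (hqhat : Measurable qhat)
    (mX : MeasurableSpace Ω)
    (hmX : mX = MeasurableSpace.comap (fun ω i => X i ω) MeasurableSpace.pi)
    (hmX_le : mX ≤ mΩ)
    (hCT : ∀ i, CondIndepFun mX hmX_le (C i) (T i) μ)
    (w : Fin n → Ω → ℝ)
    (hw : w = fun i ω => ((μ⟦{ω' | qhat (X i ω') ≤ (C i ω' : ℝ)} | mX⟧) ω)⁻¹)
    (hwfin : ∀ i, ∀ᵐ ω ∂μ, 0 < (μ⟦{ω' | qhat (X i ω') ≤ (C i ω' : ℝ)} | mX⟧) ω)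
    (hatα : Ω → ℝ)
    (hhatα : hatα = fun ω => (1 / (n : ℝ)) * ∑ i, w i ω *
      (if qhat (X i ω) ≤ (C i ω : ℝ) then 1 else 0) *
      (if (T i ω : ℝ) < qhat (X i ω) then 1 else 0)) :
    (∫ ω, hatα ω ∂μ) =
      (1 / (n : ℝ)) * ∑ i, (μ {ω | (T i ω : ℝ) < qhat (X i ω)}).toReal := by
  have hX : ∀ i, Measurable[mX] (X i) :=
    measurable_pi_iff.mp (hmX ▸ comap_measurable fun ω i => X i ω)
  have hterm i := integral_inv_condExp_le_mul_ite_mul_ite (C := fun ω => (C i ω : ℝ))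
    (T := fun ω => (T i ω : ℝ)) (f := fun ω => qhat (X i ω)) (measurable_from_top.comp (hCmeas i))
    (measurable_from_top.comp (hTmeas i)) ((hCT i).comp measurable_from_top measurable_from_top)
    (hqhat.comp (hX i)) (hwfin i)
  subst hw hhatα
  rw [integral_const_mul, integral_finsetSum _ fun i _ => (hterm i).1]
  simp only [(hterm _).2, measureReal_def]

/-- Unbiasedness of the weighted miscoverage estimator. If each `C_i`
is conditionally independent of `T_i` given `(X_1,…,X_n)`, and
`w(i) = 1/P(qhat(X_i) ≤ C_i | X_1,…,X_n)` is a.s. finite, then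
`E[α̂] = (1/n) ∑ P(T_i < qhat(X_i))`. -/
theorem stmt_7 {Ω 𝒳 : Type*} [mΩ : MeasurableSpace Ω] [StandardBorelSpace Ω] [Nonempty Ω]
    [MeasurableSpace 𝒳]
    (μ : Measure Ω) [IsProbabilityMeasure μ]
    (n : ℕ) (hn : 0 < n)
    (X : Fin n → Ω → 𝒳) (hXmeas : ∀ i, Measurable (X i))
    (T : Fin n → Ω → ℕ) (hTmeas : ∀ i, Measurable (T i))
    (C : Fin n → Ω → ℕ) (hCmeas : ∀ i, Measurable (C i))
    (qhat : 𝒳 → ℝ) (hqhat : Measurable qhat)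
    (mX : MeasurableSpace Ω)
    (hmX : mX = MeasurableSpace.comap (fun ω i => X i ω) MeasurableSpace.pi)
    (hmX_le : mX ≤ mΩ)
    (hCT : ∀ i, CondIndepFun mX hmX_le (C i) (T i) μ)
    (w : Fin n → Ω → ℝ)
    (hw : w = fun i ω => ((μ⟦{ω' | qhat (X i ω') ≤ (C i ω' : ℝ)} | mX⟧) ω)⁻¹)
    (hwfin : ∀ i, ∀ᵐ ω ∂μ, 0 < (μ⟦{ω' | qhat (X i ω') ≤ (C i ω' : ℝ)} | mX⟧) ω)
    (hatα : Ω → ℝ)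
    (hhatα : hatα = fun ω => (1 / (n : ℝ)) * ∑ i, w i ω *
      (if qhat (X i ω) ≤ (C i ω : ℝ) then 1 else 0) *
      (if (T i ω : ℝ) < qhat (X i ω) then 1 else 0)) :
    (∫ ω, hatα ω ∂μ) =
      (1 / (n : ℝ)) * ∑ i, (μ {ω | (T i ω : ℝ) < qhat (X i ω)}).toReal :=
  stmt_7_general (mΩ := mΩ) μ n X T hTmeas C hCmeas qhat hqhat mX hmX hmX_le hCT w hw hwfin hatα
    hhatα
end
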